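/- Let G and H be groups, let n ≥ 1, and let α : G → H be a surjective group homomorphism. Then the subgroup K = {(k_1, …, k_{n-1}, 1) : k_i ∈ ker α} of G^n is a normal subgroup of G^n_H, its intersection with the diagonal subgroup Δ_n(G) is trivial, and K · Δ_n(G) = G^n_H; in other words, G^n_H is the internal semidirect product of K and Δ_n(G). -/

import Mathlib

open Pointwise

/-- The `n`-fold fibre product `G^n_H` of a homomorphism `α : G →* H`,
as a subgroup of `Gⁿ`. -/
def fiberProd {G H : Type*} [Group G] [Group H] (α : G →* H) (n : ℕ) :
    Subgroup (Fin n → G) where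
  carrier := {g | ∀ i j, α (g i) = α (g j)}
  one_mem' := fun _ _ => rfl
  mul_mem' := by
    intro a b ha hb i j
    simp only [Pi.mul_apply, map_mul, ha i j, hb i j]
  inv_mem' := by
    intro a ha i j
    simp only [Pi.inv_apply, map_inv, ha i j]

/-- The diagonal homomorphism `Δ_n : G →* Gⁿ`. -/
def diagHom (G : Type*) [Group G] (n : ℕ) : G →* (Fin n → G) where
  toFun g := fun _ => g
  map_one' := rfl
  map_mul' _ _ := rfl

/-- The subgroup `K = (ker α)^{n-1} × {1}` of `Gⁿ`: tuples with all coordinates in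
`ker α` and trivial last coordinate. -/
def Ksub {G H : Type*} [Group G] [Group H] (α : G →* H) (n : ℕ) (hn : 1 ≤ n) :
    Subgroup (Fin n → G) where
  carrier := {g | (∀ i, g i ∈ α.ker) ∧ g ⟨n - 1, by omega⟩ = 1}
  one_mem' := ⟨fun _ => α.ker.one_mem, rfl⟩
  mul_mem' := by
    intro a b ha hb
    exact ⟨fun i => α.ker.mul_mem (ha.1 i) (hb.1 i), by
      show a _ * b _ = 1
      rw [ha.2, hb.2, one_mul]⟩
  inv_mem' := by
    intro a ha
    exact ⟨fun i => α.ker.inv_mem (ha.1 i), by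
      show (a _)⁻¹ = 1
      rw [ha.2, inv_one]⟩

section

variable {G H : Type*} [Group G] [Group H] (α : G →* H) {n : ℕ} (hn : 1 ≤ n)

instance Ksub_normal : (Ksub α n hn).Normal where
  conj_mem k hk g := by
    refine ⟨fun i => α.normal_ker.conj_mem (k i) (hk.1 i) (g i), ?_⟩
    show g _ * k _ * (g _)⁻¹ = 1
    rw [hk.2, mul_one, mul_inv_cancel]

theorem Ksub_le_fiberProd : Ksub α n hn ≤ fiberProd α n := fun k hk i j => by
  rw [(hk.1 i : α (k i) = 1), (hk.1 j : α (k j) = 1)]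

theorem range_diagHom_le_fiberProd : (diagHom G n).range ≤ fiberProd α n := by
  rintro _ ⟨c, rfl⟩ i j
  rfl

theorem Ksub_inf_range_diagHom : Ksub α n hn ⊓ (diagHom G n).range = ⊥ := by
  rw [eq_bot_iff]
  rintro _ ⟨hk, c, rfl⟩
  obtain rfl : c = 1 := hk.2
  exact (diagHom G n).map_one

theorem mul_diagHom_inv_last_mem_Ksub {g : Fin n → G} (hg : g ∈ fiberProd α n) :
    g * diagHom G n (g ⟨n - 1, by omega⟩)⁻¹ ∈ Ksub α n hn := by
  refine ⟨fun i => ?_, mul_inv_cancel _⟩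
  show α (g i * (g _)⁻¹) = 1
  rw [map_mul, map_inv, hg i ⟨n - 1, by omega⟩, mul_inv_cancel]

theorem Ksub_mul_range_diagHom :
    (Ksub α n hn * (diagHom G n).range : Set (Fin n → G)) = fiberProd α n :=
  subset_antisymm (Subgroup.mul_subset (Ksub_le_fiberProd α hn) (range_diagHom_le_fiberProd α))
    fun g hg => ⟨_, mul_diagHom_inv_last_mem_Ksub α hn hg, _, ⟨_, rfl⟩, inv_mul_cancel_right g _⟩

end

theorem stmt_2_general {G H : Type*} [Group G] [Group H] (n : ℕ) (hn : 1 ≤ n)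
    (α : G →* H) :
    (∀ g ∈ fiberProd α n, ∀ k ∈ Ksub α n hn, g * k * g⁻¹ ∈ Ksub α n hn) ∧
    Ksub α n hn ⊓ (diagHom G n).range = ⊥ ∧
    (↑(Ksub α n hn) * ↑(diagHom G n).range : Set (Fin n → G)) = ↑(fiberProd α n) :=
  ⟨fun g _ k hk => (Ksub_normal α hn).conj_mem k hk g, Ksub_inf_range_diagHom α hn,
    Ksub_mul_range_diagHom α hn⟩

/-- For a surjective group homomorphism `α : G → H` and `n ≥ 1`,
the subgroup `K = (ker α)^{n-1} × {1}` of `Gⁿ` is normal in the fibre product `G^n_H`,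
meets the diagonal subgroup `Δ_n(G)` trivially, and satisfies `K · Δ_n(G) = G^n_H`;
i.e. `G^n_H` is the internal semidirect product of `K` and `Δ_n(G)`. -/
theorem stmt_2 {G H : Type*} [Group G] [Group H] (n : ℕ) (hn : 1 ≤ n)
    (α : G →* H) (hα : Function.Surjective α) :
    (∀ g ∈ fiberProd α n, ∀ k ∈ Ksub α n hn, g * k * g⁻¹ ∈ Ksub α n hn) ∧
    Ksub α n hn ⊓ (diagHom G n).range = ⊥ ∧
    (↑(Ksub α n hn) * ↑(diagHom G n).range : Set (Fin n → G)) = ↑(fiberProd α n) :=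
  stmt_2_general n hn α
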